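/- Let k be a field, H a Hopf algebra over k, and I a left ideal coideal of H. Then H^{co H/I} is a right coideal subalgebra of H: it contains 1, is closed under multiplication and scalar multiplication, and satisfies Δ(H^{co H/I}) ⊆ H^{co H/I} ⊗ H (as a subspace of H ⊗ H). -/

import Mathlib

open TensorProduct

noncomputable section

namespace HopfGalois

variable (k : Type*) (H : Type*) [Field k] [Ring H] [HopfAlgebra k H]

/-- The linear map `H ⊗ H → H`, `x ⊗ y ↦ ε(x) • y`. -/
def epsTensorId : H ⊗[k] H →ₗ[k] H :=
  (TensorProduct.lid k H).toLinearMap ∘ₗ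
    TensorProduct.map (Coalgebra.counit : H →ₗ[k] k) (LinearMap.id : H →ₗ[k] H)

/-- The linear map `H ⊗ H → H`, `x ⊗ y ↦ ε(y) • x`. -/
def idTensorEps : H ⊗[k] H →ₗ[k] H :=
  (TensorProduct.rid k H).toLinearMap ∘ₗ
    TensorProduct.map (LinearMap.id : H →ₗ[k] H) (Coalgebra.counit : H →ₗ[k] k)

/-- `x ⊗ y ↦ Σ x₍₁₎ ⊗ π_I(x₍₂₎) ⊗ y`. -/
def cotensorL (I : Submodule k H) : H ⊗[k] H →ₗ[k] H ⊗[k] ((H ⧸ I) ⊗[k] H) :=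
  TensorProduct.map (LinearMap.id : H →ₗ[k] H)
      (TensorProduct.map I.mkQ (LinearMap.id : H →ₗ[k] H))
    ∘ₗ (TensorProduct.assoc k H H H).toLinearMap
    ∘ₗ TensorProduct.map (Coalgebra.comul : H →ₗ[k] H ⊗[k] H) (LinearMap.id : H →ₗ[k] H)

/-- `x ⊗ y ↦ Σ x ⊗ π_I(y₍₁₎) ⊗ y₍₂₎`. -/
def cotensorR (I : Submodule k H) : H ⊗[k] H →ₗ[k] H ⊗[k] ((H ⧸ I) ⊗[k] H) :=
  TensorProduct.map (LinearMap.id : H →ₗ[k] H)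
    (TensorProduct.map I.mkQ (LinearMap.id : H →ₗ[k] H)
      ∘ₗ (Coalgebra.comul : H →ₗ[k] H ⊗[k] H))

/-- The cotensor product `H □^{H/I} H` as a subspace of `H ⊗ H`. -/
def cotensor (I : Submodule k H) : Submodule k (H ⊗[k] H) :=
  LinearMap.ker (cotensorL k H I - cotensorR k H I)

/-- The subspace of coinvariants `H^{co H/I}`:
`{x ∈ H : Σ π_I(x₍₁₎) ⊗ x₍₂₎ = π_I(1) ⊗ x}`. -/
def coinv (I : Submodule k H) : Submodule k H :=
  LinearMap.ker
    ((TensorProduct.map I.mkQ (LinearMap.id : H →ₗ[k] H)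
        ∘ₗ (Coalgebra.comul : H →ₗ[k] H ⊗[k] H))
      - TensorProduct.mk k (H ⧸ I) H (I.mkQ 1))

/-- A left ideal coideal: a left ideal `I` with `ε(I) = 0` and `Δ(I) ⊆ I ⊗ H + H ⊗ I`. -/
structure IsLeftIdealCoideal (I : Submodule k H) : Prop where
  mul_mem_left : ∀ (h x : H), x ∈ I → h * x ∈ I
  counit_zero : ∀ x ∈ I, (Coalgebra.counit : H →ₗ[k] k) x = 0
  comul_mem : ∀ x ∈ I, (Coalgebra.comul : H →ₗ[k] H ⊗[k] H) x ∈
    LinearMap.range (TensorProduct.map I.subtype (LinearMap.id : H →ₗ[k] H)) ⊔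
      LinearMap.range (TensorProduct.map (LinearMap.id : H →ₗ[k] H) I.subtype)

/-- A right coideal subalgebra: a subalgebra `B` with `Δ(B) ⊆ B ⊗ H`. -/
def IsRightCoidealSubalgebra (B : Subalgebra k H) : Prop :=
  ∀ b ∈ B, (Coalgebra.comul : H →ₗ[k] H ⊗[k] H) b ∈
    LinearMap.range
      (TensorProduct.map (Subalgebra.toSubmodule B).subtype (LinearMap.id : H →ₗ[k] H))

/-- The left ideal of `H` generated by a subset `S`, as a `k`-subspace of `H`. -/
def leftIdealGen (S : Set H) : Submodule k H :=
  Submodule.span k {z : H | ∃ h : H, ∃ b ∈ S, z = h * b}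

/-- `S⁺ = S ∩ ker ε`. -/
def plusPart (S : Set H) : Set H :=
  {b ∈ S | (Coalgebra.counit : H →ₗ[k] k) b = 0}

/-- `H·S⁺`, the left ideal of `H` generated by `S ∩ ker ε`. -/
def HSplus (S : Set H) : Submodule k H :=
  leftIdealGen k H (plusPart k H S)

/-- The subspace `J_B ⊆ H ⊗ H` spanned by `{xb ⊗ y − x ⊗ by : x, y ∈ H, b ∈ B}`,
so that `H ⊗_B H = (H ⊗ H)/J_B`. -/
def JB (S : Set H) : Submodule k (H ⊗[k] H) :=
  Submodule.span k
    {z : H ⊗[k] H | ∃ x y : H, ∃ b ∈ S, z = (x * b) ⊗ₜ[k] y - x ⊗ₜ[k] (b * y)}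

/-- `B` is the equalizer of the two canonical maps `H → H ⊗_B H`. -/
def equalizerCond (S : Set H) : Prop :=
  {h : H | h ⊗ₜ[k] (1 : H) - (1 : H) ⊗ₜ[k] h ∈ JB k H S} = S

/-- `H/I` is the coequalizer of `ε ⊗ id` and `id ⊗ ε` restricted to `H □^{H/I} H`, i.e.
`I` is the subspace spanned by `{Σ ε(xᵢ)yᵢ − Σ xᵢε(yᵢ) : Σ xᵢ ⊗ yᵢ ∈ H □^{H/I} H}`. -/
def coequalizerCond (I : Submodule k H) : Prop :=
  I = Submodule.map (epsTensorId k H - idTensorEps k H) (cotensor k H I)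

/-! Because `I` is a left ideal, `π_I(a b)` only depends on `a` and `π_I(b)`; hence
`(π_I ⊗ id)(Δx Δy) = π_I(1) ⊗ x y` for coinvariant `x, y`. For coinvariant `x`,
coassociativity gives `(π_I ⊗ Δ)(Δx) = π_I(1) ⊗ Δx`, i.e. `Δx ∈ ker (T ⊗ id)` where
`H^{co H/I} = ker T`; over a field `- ⊗ H` is exact, so `ker (T ⊗ id) = H^{co H/I} ⊗ H`. -/

open LinearMap

section LeftIdeal

variable {R A : Type*} [CommRing R] [Ring A] [Algebra R A] {I : Submodule R A}

def mulLeftQ (hI : ∀ a x : A, x ∈ I → a * x ∈ I) (a : A) : (A ⧸ I) →ₗ[R] A ⧸ I :=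
  I.mapQ I (mulLeft R a) (hI a)

lemma mulLeftQ_mkQ (hI : ∀ a x : A, x ∈ I → a * x ∈ I) (a x : A) :
    mulLeftQ hI a (Submodule.Quotient.mk x) = Submodule.Quotient.mk (a * x) :=
  rfl

lemma map_mkQ_tmul_mul (hI : ∀ a x : A, x ∈ I → a * x ∈ I) (a b : A) (w : A ⊗[R] A) :
    map I.mkQ id ((a ⊗ₜ b) * w) = map (mulLeftQ hI a) (mulLeft R b) (map I.mkQ id w) := by
  induction w with
  | zero => simp
  | tmul c d => simp [Algebra.TensorProduct.tmul_mul_tmul, mulLeftQ_mkQ]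
  | add w₁ w₂ ih₁ ih₂ => simp only [mul_add, map_add, ih₁, ih₂]

lemma map_mkQ_mul_of_map_mkQ_eq (hI : ∀ a x : A, x ∈ I → a * x ∈ I) {w : A ⊗[R] A} {y : A}
    (hw : map I.mkQ id w = I.mkQ 1 ⊗ₜ y) (v : A ⊗[R] A) :
    map I.mkQ id (v * w) = map id (mulRight R y) (map I.mkQ id v) := by
  induction v with
  | zero => simp
  | tmul a b => simp [map_mkQ_tmul_mul hI, hw, mulLeftQ_mkQ]
  | add v₁ v₂ ih₁ ih₂ => simp only [add_mul, map_add, ih₁, ih₂]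

end LeftIdeal

lemma mem_range_rTensor_ker_sub_subtype_iff {R M N P : Type*} [CommRing R] [AddCommGroup M]
    [AddCommGroup N] [AddCommGroup P] [Module R M] [Module R N] [Module R P] [Module.Flat R P]
    (f g : M →ₗ[R] N) (x : M ⊗[R] P) :
    x ∈ range ((ker (f - g)).subtype.rTensor P) ↔ f.rTensor P x = g.rTensor P x := by
  rw [← sub_eq_zero, ← LinearMap.sub_apply, ← rTensor_sub]
  exact (Module.Flat.rTensor_exact P (exact_subtype_ker_map (f - g)) x).symm

lemma assoc_rTensor_mk {R M N P : Type*} [CommSemiring R] [AddCommMonoid M]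
    [AddCommMonoid N] [AddCommMonoid P] [Module R M] [Module R N] [Module R P]
    (m : M) (w : N ⊗[R] P) :
    TensorProduct.assoc R M N P ((TensorProduct.mk R M N m).rTensor P w) = m ⊗ₜ w := by
  induction w with
  | zero => simp
  | tmul a b => simp
  | add w₁ w₂ ih₁ ih₂ => simp only [map_add, ih₁, ih₂, tmul_add]

lemma assoc_rTensor_map_comul_comul {R C M : Type*} [CommSemiring R] [AddCommMonoid C]
    [Module R C] [Coalgebra R C] [AddCommMonoid M] [Module R M] (f : C →ₗ[R] M) (x : C) :
    TensorProduct.assoc R M C C ((map f id ∘ₗ Coalgebra.comul).rTensor C (Coalgebra.comul x)) =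
      (Coalgebra.comul (R := R)).lTensor M (map f id (Coalgebra.comul x)) := by
  rw [rTensor_comp, comp_apply, rTensor, ← map_map_assoc, ← rTensor_def, Coalgebra.coassoc_apply,
    rTensor_id, lTensor, lTensor, map_map, map_map, comp_id, id_comp, comp_id, id_comp]

section Coinvariants

variable {k H} {I : Submodule k H}

lemma mem_coinv_iff {x : H} :
    x ∈ coinv k H I ↔ map I.mkQ id (Coalgebra.comul (R := k) x) = I.mkQ 1 ⊗ₜ x := by
  rw [coinv, mem_ker, LinearMap.sub_apply, sub_eq_zero, comp_apply, TensorProduct.mk_apply]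

variable (I) in
lemma one_mem_coinv : (1 : H) ∈ coinv k H I := by
  simp [mem_coinv_iff, Algebra.TensorProduct.one_def]

lemma mul_mem_coinv (hI : ∀ h x : H, x ∈ I → h * x ∈ I) {x y : H} (hx : x ∈ coinv k H I)
    (hy : y ∈ coinv k H I) : x * y ∈ coinv k H I := by
  rw [mem_coinv_iff] at hx hy ⊢
  rw [Bialgebra.comul_mul, map_mkQ_mul_of_map_mkQ_eq hI hy, hx, map_tmul, id_apply,
    mulRight_apply]

lemma comul_mem_range_map_coinv_subtype {x : H} (hx : x ∈ coinv k H I) :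
    Coalgebra.comul (R := k) x ∈ range (map (coinv k H I).subtype id) := by
  refine (mem_range_rTensor_ker_sub_subtype_iff _ _ _).2 ?_
  apply (TensorProduct.assoc k (H ⧸ I) H H).injective
  rw [assoc_rTensor_map_comul_comul, assoc_rTensor_mk, mem_coinv_iff.1 hx, lTensor_tmul]

end Coinvariants

/-- For a left ideal coideal `I`, the coinvariants `H^{co H/I}` form a
right coideal subalgebra: they contain `1`, are closed under multiplication and scalar
multiplication, and `Δ(H^{co H/I}) ⊆ H^{co H/I} ⊗ H`. -/
theorem coinv_isRightCoidealSubalgebra (k H : Type*) [Field k] [Ring H] [HopfAlgebra k H]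
    (I : Submodule k H) (hI : IsLeftIdealCoideal k H I) :
    (1 : H) ∈ coinv k H I ∧
    (∀ x y : H, x ∈ coinv k H I → y ∈ coinv k H I → x * y ∈ coinv k H I) ∧
    (∀ (c : k) (x : H), x ∈ coinv k H I → c • x ∈ coinv k H I) ∧
    (∀ x ∈ coinv k H I, (Coalgebra.comul : H →ₗ[k] H ⊗[k] H) x ∈
      LinearMap.range
        (TensorProduct.map (coinv k H I).subtype (LinearMap.id : H →ₗ[k] H))) :=
  ⟨one_mem_coinv I, fun _ _ ↦ mul_mem_coinv hI.mul_mem_left, fun c _ ↦ (coinv k H I).smul_mem c,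
    fun _ ↦ comul_mem_range_map_coinv_subtype⟩

end HopfGalois
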